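/- There exists δ_0 ∈ (0,1) such that for all δ ∈ (0,δ_0) and every s in the unit sphere S = {q ∈ M : ⟨q,q⟩_M = 1} with s ∉ Δ, the ray R_s = {λ s : λ > 0} intersects the topological frontier ∂Ξ^{(δ)}_{𝒞_min} of the free Graf atom in exactly one point; moreover the map S∖Δ → ∂Ξ^{(δ)}_{𝒞_min} sending s to this intersection point is a homeomorphism. In particular S∖Δ is homeomorphic to ∂Ξ^{(δ)}_{𝒞_min}. -/

import Mathlib

open scoped BigOperators
open Filter MeasureTheory

noncomputable section

/-- The space of configurations of `n` points in `ℝ^d`. -/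
abbrev Vec (d n : ℕ) := Fin n → EuclideanSpace ℝ (Fin d)

/-- The mass inner product `⟨q,q'⟩_M = ∑ i, m i ⟨q i, q' i⟩`. -/
def massInner {d n : ℕ} (m : Fin n → ℝ) (q q' : Vec d n) : ℝ :=
  ∑ i, m i * (inner ℝ (q i) (q' i) : ℝ)

/-- The mass norm. -/
def massNorm {d n : ℕ} (m : Fin n → ℝ) (q : Vec d n) : ℝ :=
  Real.sqrt (massInner m q q)

/-- The center-of-mass-zero configuration space `M`. -/
def configSet {d n : ℕ} (m : Fin n → ℝ) : Set (Vec d n) :=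
  {q | ∑ i, m i • q i = 0}

/-- The collision set `Δ`. -/
def collSet (d n : ℕ) : Set (Vec d n) :=
  {q | ∃ i j : Fin n, i ≠ j ∧ q i = q j}

/-- The (negative of the) potential `U(q) = ∑_{i<j} Z i j ‖q i - q j‖^(-α)`. -/
def potU {d n : ℕ} (Z : Fin n → Fin n → ℝ) (α : ℝ) (q : Vec d n) : ℝ :=
  ∑ p ∈ Finset.univ.filter (fun p : Fin n × Fin n => p.1 < p.2),
    Z p.1 p.2 * ‖q p.1 - q p.2‖ ^ (-α)


/-- A partition (cluster decomposition) of `N = {1,…,n}`. -/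
def IsPartition {n : ℕ} (𝒞 : Finset (Finset (Fin n))) : Prop :=
  (∀ C ∈ 𝒞, C.Nonempty) ∧
  (∀ C ∈ 𝒞, ∀ D ∈ 𝒞, C ≠ D → Disjoint C D) ∧
  (∀ i : Fin n, ∃ C ∈ 𝒞, i ∈ C)

/-- `i` and `j` lie in the same atom of `𝒞`, i.e. `[i]_𝒞 = [j]_𝒞`. -/
def sameAtom {n : ℕ} (𝒞 : Finset (Finset (Fin n))) (i j : Fin n) : Prop :=
  ∃ C ∈ 𝒞, i ∈ C ∧ j ∈ C

/-- The finest partition, into singletons. -/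
def cMin (n : ℕ) : Finset (Finset (Fin n)) :=
  Finset.univ.image fun i : Fin n => ({i} : Finset (Fin n))

/-- `Δ^E_C` for a subset `C ⊆ N`. -/
def deltaEC {d n : ℕ} (m : Fin n → ℝ) (C : Finset (Fin n)) : Set (Vec d n) :=
  {q | q ∈ configSet m ∧ ∀ i ∈ C, ∀ j ∈ C, q i = q j}

/-- `Δ^E_𝒞` for a partition `𝒞`. -/
def deltaEPart {d n : ℕ} (m : Fin n → ℝ) (𝒞 : Finset (Finset (Fin n))) : Set (Vec d n) :=
  {q | q ∈ configSet m ∧ ∀ i j : Fin n, sameAtom 𝒞 i j → q i = q j}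

/-- `Δ^I_C`, the mass-orthogonal complement of `Δ^E_C` in `M`. -/
def deltaIC {d n : ℕ} (m : Fin n → ℝ) (C : Finset (Fin n)) : Set (Vec d n) :=
  {q | q ∈ configSet m ∧ (∀ i ∉ C, q i = 0) ∧ ∑ i ∈ C, m i • q i = 0}

/-- `𝒞 ≼ 𝒟` : `𝒞` refines `𝒟`. -/
def Refines {n : ℕ} (𝒞 𝒟 : Finset (Finset (Fin n))) : Prop :=
  ∀ C ∈ 𝒞, ∃ D ∈ 𝒟, C ⊆ D
/-- `M` as a submodule. -/
def configSub {d n : ℕ} (m : Fin n → ℝ) : Submodule ℝ (Vec d n) where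
  carrier := configSet m
  add_mem' := by
    intro a b ha hb
    simp only [configSet, Set.mem_setOf_eq, Pi.add_apply, smul_add,
      Finset.sum_add_distrib] at ha hb ⊢
    rw [ha, hb, add_zero]
  zero_mem' := by simp [configSet]
  smul_mem' := by
    intro c a ha
    simp only [configSet, Set.mem_setOf_eq, Pi.smul_apply] at ha ⊢
    have h : ∑ i : Fin n, m i • c • a i = c • ∑ i : Fin n, m i • a i := by
      rw [Finset.smul_sum]
      exact Finset.sum_congr rfl fun i _ => smul_comm (m i) c (a i)
    rw [h, ha, smul_zero]

lemma massInner_add_left {d n : ℕ} (m : Fin n → ℝ) (a b p : Vec d n) :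
    massInner m (a + b) p = massInner m a p + massInner m b p := by
  simp only [massInner, Pi.add_apply, inner_add_left, mul_add, Finset.sum_add_distrib]

lemma massInner_smul_left {d n : ℕ} (m : Fin n → ℝ) (c : ℝ) (a p : Vec d n) :
    massInner m (c • a) p = c * massInner m a p := by
  simp only [massInner, Pi.smul_apply, real_inner_smul_left, Finset.mul_sum]
  exact Finset.sum_congr rfl fun i _ => by ring

/-- `Δ^E_𝒞` as a submodule. -/
def deltaEPartSub {d n : ℕ} (m : Fin n → ℝ) (𝒞 : Finset (Finset (Fin n))) :
    Submodule ℝ (Vec d n) where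
  carrier := deltaEPart m 𝒞
  add_mem' := by
    intro a b ha hb
    exact ⟨(configSub m).add_mem ha.1 hb.1, fun i j h => by
      simp only [Pi.add_apply, ha.2 i j h, hb.2 i j h]⟩
  zero_mem' := ⟨(configSub m).zero_mem, fun i j _ => rfl⟩
  smul_mem' := by
    intro c a ha
    exact ⟨(configSub m).smul_mem c ha.1, fun i j h => by
      simp only [Pi.smul_apply, ha.2 i j h]⟩

/-- `Δ^I_𝒞`, the mass-orthogonal complement of `Δ^E_𝒞` in `M`, as a submodule. -/
def deltaIPartSub {d n : ℕ} (m : Fin n → ℝ) (𝒞 : Finset (Finset (Fin n))) :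
    Submodule ℝ (Vec d n) where
  carrier := {q | q ∈ configSet m ∧ ∀ p ∈ deltaEPart m 𝒞, massInner m q p = 0}
  add_mem' := by
    intro a b ha hb
    refine ⟨(configSub m).add_mem ha.1 hb.1, fun p hp => ?_⟩
    rw [massInner_add_left, ha.2 p hp, hb.2 p hp, add_zero]
  zero_mem' := by
    refine ⟨(configSub m).zero_mem, fun p hp => ?_⟩
    simp [massInner]
  smul_mem' := by
    intro c a ha
    refine ⟨(configSub m).smul_mem c ha.1, fun p hp => ?_⟩
    rw [massInner_smul_left, ha.2 p hp, mul_zero]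
/-- `J^E_𝒞(q) = ∑_{C∈𝒞} m_C ‖q_C‖²`, the cluster barycenter moment of inertia. -/
def JEfun {d n : ℕ} (m : Fin n → ℝ) (𝒞 : Finset (Finset (Fin n))) (q : Vec d n) : ℝ :=
  ∑ C ∈ 𝒞, (∑ j ∈ C, m j) * ‖(∑ j ∈ C, m j)⁻¹ • ∑ j ∈ C, m j • q j‖ ^ 2

/-- The Graf atom `Ξ^{(δ)}_𝒞`: the set where `J^E_𝒞 + δ^{|𝒞|}` realizes the maximum
`J^{(δ)}` over all partitions. -/
def GrafSet {d n : ℕ} (m : Fin n → ℝ) (δ : ℝ) (𝒞 : Finset (Finset (Fin n))) :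
    Set (Vec d n) :=
  {q | ∀ 𝒟 : Finset (Finset (Fin n)), IsPartition 𝒟 →
      JEfun m 𝒟 q + δ ^ 𝒟.card ≤ JEfun m 𝒞 q + δ ^ 𝒞.card}

/-- `S∖Δ`: the unit sphere of `(M,⟨·,·⟩_M)` minus the collision set, inside `M`. -/
def sphereCompl {d n : ℕ} (m : Fin n → ℝ) : Set ↥(configSub (d := d) m) :=
  {q | massInner m q.1 q.1 = 1 ∧ q.1 ∉ collSet d n}

/-- The topological frontier `∂Ξ^{(δ)}_{𝒞min}` of the free Graf atom, inside `M`. -/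
def grafFrontier {d n : ℕ} (m : Fin n → ℝ) (δ : ℝ) : Set ↥(configSub (d := d) m) :=
  frontier (Subtype.val ⁻¹' GrafSet m δ (cMin n))

section aux
variable {d n : ℕ} (m : Fin n → ℝ)

lemma JEfun_smul (𝒟 : Finset (Finset (Fin n))) (c : ℝ) (q : Vec d n) :
    JEfun m 𝒟 (c • q) = c ^ 2 * JEfun m 𝒟 q := by
  unfold JEfun
  rw [Finset.mul_sum]
  refine Finset.sum_congr rfl fun C _ => ?_
  have h1 : ∑ j ∈ C, m j • (c • q) j = c • ∑ j ∈ C, m j • q j := by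
    rw [Finset.smul_sum]
    exact Finset.sum_congr rfl fun j _ => smul_comm (m j) c (q j)
  rw [h1, smul_comm, norm_smul, mul_pow, Real.norm_eq_abs, sq_abs]
  ring

lemma sum_partition {M : Type*} [AddCommMonoid M] {𝒟 : Finset (Finset (Fin n))} (h : IsPartition 𝒟) (g : Fin n → M) :
    ∑ C ∈ 𝒟, ∑ j ∈ C, g j = ∑ j, g j := by
  have hdisj : (↑𝒟 : Set (Finset (Fin n))).PairwiseDisjoint id := by
    intro C hC D hD hne
    exact h.2.1 C hC D hD hne
  have hcov : 𝒟.biUnion id = Finset.univ := by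
    refine Finset.eq_univ_iff_forall.2 fun i => ?_
    obtain ⟨C, hC, hiC⟩ := h.2.2 i
    exact Finset.mem_biUnion.2 ⟨C, hC, hiC⟩
  rw [← hcov, Finset.sum_biUnion hdisj]; rfl

lemma card_sum_partition {𝒟 : Finset (Finset (Fin n))} (h : IsPartition 𝒟) :
    ∑ C ∈ 𝒟, C.card = n := by
  have := sum_partition (n := n) h (fun _ => (1 : ℕ))
  simpa using this

lemma JEfun_cMin (hm : ∀ i, 0 < m i) (q : Vec d n) :
    JEfun m (cMin n) q = ∑ i, m i * ‖q i‖ ^ 2 := by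
  unfold JEfun cMin
  rw [Finset.sum_image (by intro a _ b _ h; simpa using h)]
  refine Finset.sum_congr rfl fun i _ => ?_
  simp only [Finset.sum_singleton]
  rw [inv_smul_smul₀ (hm i).ne']

lemma atom_gap (hm : ∀ i, 0 < m i) (C : Finset (Fin n)) (hC : C.Nonempty) (q : Vec d n) :
    (∑ j ∈ C, m j * ‖q j‖ ^ 2) - (∑ j ∈ C, m j) * ‖(∑ j ∈ C, m j)⁻¹ • ∑ j ∈ C, m j • q j‖ ^ 2
      = (2 * ∑ j ∈ C, m j)⁻¹ * ∑ j ∈ C, ∑ k ∈ C, m j * m k * ‖q j - q k‖ ^ 2 := by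
  set mC := ∑ j ∈ C, m j with hmC
  have hmCpos : 0 < mC := Finset.sum_pos (fun j _ => hm j) hC
  have hv : ‖mC⁻¹ • ∑ j ∈ C, m j • q j‖ ^ 2 = mC⁻¹ ^ 2 * ‖∑ j ∈ C, m j • q j‖ ^ 2 := by
    rw [norm_smul, mul_pow, Real.norm_eq_abs, sq_abs]
  have hS2 : ‖∑ j ∈ C, m j • q j‖ ^ 2 = ∑ j ∈ C, ∑ k ∈ C, m j * m k * (inner ℝ (q j) (q k) : ℝ) := by
    rw [← real_inner_self_eq_norm_sq, inner_sum]
    refine Finset.sum_congr rfl fun k _ => ?_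
    rw [sum_inner]
    refine Finset.sum_congr rfl fun j _ => ?_
    rw [real_inner_smul_left, real_inner_smul_right, real_inner_comm]
    ring
  have hexp : ∀ j k : Fin n, ‖q j - q k‖ ^ 2
      = ‖q j‖ ^ 2 - 2 * (inner ℝ (q j) (q k) : ℝ) + ‖q k‖ ^ 2 := by
    intro j k
    rw [norm_sub_sq_real]
  have hdouble : ∑ j ∈ C, ∑ k ∈ C, m j * m k * ‖q j - q k‖ ^ 2
      = 2 * mC * (∑ j ∈ C, m j * ‖q j‖ ^ 2)
        - 2 * ∑ j ∈ C, ∑ k ∈ C, m j * m k * (inner ℝ (q j) (q k) : ℝ) := by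
    have e1 : ∀ j ∈ C, ∑ k ∈ C, m j * m k * ‖q j - q k‖ ^ 2
        = (m j * ‖q j‖ ^ 2) * mC + m j * (∑ k ∈ C, m k * ‖q k‖ ^ 2)
          - 2 * ∑ k ∈ C, m j * m k * (inner ℝ (q j) (q k) : ℝ) := by
      intro j _
      have : ∀ k ∈ C, m j * m k * ‖q j - q k‖ ^ 2
          = (m j * ‖q j‖ ^ 2) * m k + m j * (m k * ‖q k‖ ^ 2)
            - 2 * (m j * m k * (inner ℝ (q j) (q k) : ℝ)) := by
        intro k _
        rw [hexp j k]; ring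
      rw [Finset.sum_congr rfl this, Finset.sum_sub_distrib, Finset.sum_add_distrib,
        ← Finset.mul_sum, ← Finset.mul_sum, ← Finset.mul_sum, ← hmC]
    rw [Finset.sum_congr rfl e1, Finset.sum_sub_distrib, Finset.sum_add_distrib,
      ← Finset.sum_mul, ← Finset.sum_mul, ← Finset.mul_sum, ← hmC]
    ring
  rw [hv, hS2, hdouble]
  field_simp

def gap {d : ℕ} (m : Fin n → ℝ) (𝒟 : Finset (Finset (Fin n))) (q : Vec d n) : ℝ :=
  JEfun m (cMin n) q - JEfun m 𝒟 q

lemma gap_smul (𝒟 : Finset (Finset (Fin n))) (c : ℝ) (q : Vec d n) :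
    gap m 𝒟 (c • q) = c ^ 2 * gap m 𝒟 q := by
  unfold gap
  rw [JEfun_smul, JEfun_smul]
  ring

lemma gap_eq (hm : ∀ i, 0 < m i) {𝒟 : Finset (Finset (Fin n))} (h : IsPartition 𝒟)
    (q : Vec d n) :
    gap m 𝒟 q = ∑ C ∈ 𝒟, (2 * ∑ j ∈ C, m j)⁻¹ *
      ∑ j ∈ C, ∑ k ∈ C, m j * m k * ‖q j - q k‖ ^ 2 := by
  unfold gap
  rw [JEfun_cMin m hm]
  unfold JEfun
  rw [ ← sum_partition h (fun j => m j * ‖q j‖ ^ 2),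
    ← Finset.sum_sub_distrib]
  exact Finset.sum_congr rfl fun C hC => atom_gap m hm C (h.1 C hC) q

lemma gap_nonneg (hm : ∀ i, 0 < m i) {𝒟 : Finset (Finset (Fin n))} (h : IsPartition 𝒟)
    (q : Vec d n) : 0 ≤ gap m 𝒟 q := by
  rw [gap_eq m hm h]
  refine Finset.sum_nonneg fun C hC => mul_nonneg ?_ ?_
  · have := Finset.sum_pos (fun j (_ : j ∈ C) => hm j) (h.1 C hC)
    positivity
  · refine Finset.sum_nonneg fun j _ => Finset.sum_nonneg fun k _ => ?_
    have := (hm j).le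
    have := (hm k).le
    positivity

lemma card_lt_of_big_atom {𝒟 : Finset (Finset (Fin n))} (h : IsPartition 𝒟)
    {C0 : Finset (Fin n)} (hC0 : C0 ∈ 𝒟) (h2 : 2 ≤ C0.card) : 𝒟.card < n := by
  have h1 : ∑ C ∈ 𝒟, 1 < ∑ C ∈ 𝒟, C.card := by
    refine Finset.sum_lt_sum (fun C hC => Finset.card_pos.2 (h.1 C hC)) ⟨C0, hC0, ?_⟩
    omega
  simpa [card_sum_partition h] using h1

lemma exists_big_atom {𝒟 : Finset (Finset (Fin n))} (h : IsPartition 𝒟)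
    (hcard : 𝒟.card < n) : ∃ C ∈ 𝒟, ∃ i ∈ C, ∃ j ∈ C, i ≠ j := by
  by_contra hcon
  push_neg at hcon
  have hall : ∀ C ∈ 𝒟, C.card = 1 := by
    intro C hC
    have h1 : C.card ≤ 1 := Finset.card_le_one.2 fun a ha b hb => by
      by_contra hab
      exact hab (hcon C hC a ha b hb)
    have h2 : 1 ≤ C.card := Finset.card_pos.2 (h.1 C hC)
    omega
  have : ∑ C ∈ 𝒟, C.card = 𝒟.card := by
    rw [Finset.sum_congr rfl hall]; simp
  rw [card_sum_partition h] at this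
  omega

lemma partition_card_le {𝒟 : Finset (Finset (Fin n))} (h : IsPartition 𝒟) : 𝒟.card ≤ n := by
  have : ∑ C ∈ 𝒟, 1 ≤ ∑ C ∈ 𝒟, C.card :=
    Finset.sum_le_sum fun C hC => Finset.card_pos.2 (h.1 C hC)
  simpa [card_sum_partition h] using this

lemma eq_cMin_of_card {𝒟 : Finset (Finset (Fin n))} (h : IsPartition 𝒟)
    (hcard : ¬ 𝒟.card < n) : 𝒟 = cMin n := by
  have hlt : ¬ ∃ C ∈ 𝒟, ∃ i ∈ C, ∃ j ∈ C, i ≠ j := by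
    intro ⟨C, hC, i, hi, j, hj, hij⟩
    have h2 : 2 ≤ C.card := by
      have : ({i, j} : Finset (Fin n)) ⊆ C := by
        intro a ha
        rcases Finset.mem_insert.1 ha with rfl | ha
        · exact hi
        · rwa [Finset.mem_singleton.1 ha]
      calc 2 = ({i, j} : Finset (Fin n)).card := by rw [Finset.card_insert_of_notMem (by simpa using hij), Finset.card_singleton]
      _ ≤ C.card := Finset.card_le_card this
    exact hcard (card_lt_of_big_atom h hC h2)
  push_neg at hlt
  ext S
  constructor
  · intro hS
    obtain ⟨i, hi⟩ := h.1 S hS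
    have : S = {i} := by
      ext a
      simp only [Finset.mem_singleton]
      constructor
      · intro ha; exact (hlt S hS a ha i hi)
      · intro ha; rwa [ha]
    rw [this]
    exact Finset.mem_image.2 ⟨i, Finset.mem_univ i, rfl⟩
  · intro hS
    obtain ⟨i, _, rfl⟩ := Finset.mem_image.1 hS
    obtain ⟨C, hC, hiC⟩ := h.2.2 i
    have : C = {i} := by
      ext a
      simp only [Finset.mem_singleton]
      constructor
      · intro ha; exact (hlt C hC a ha i hiC)
      · intro ha; rwa [ha]
    rwa [← this]

lemma gap_pos (hm : ∀ i, 0 < m i) {𝒟 : Finset (Finset (Fin n))} (h : IsPartition 𝒟)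
    (hcard : 𝒟.card < n) {q : Vec d n}
    (hq : ∀ i j : Fin n, i ≠ j → q i ≠ q j) : 0 < gap m 𝒟 q := by
  obtain ⟨C, hC, i, hi, j, hj, hij⟩ := exists_big_atom h hcard
  rw [gap_eq m hm h]
  have hterm : ∀ D ∈ 𝒟, 0 ≤ (2 * ∑ j ∈ D, m j)⁻¹ *
      ∑ a ∈ D, ∑ b ∈ D, m a * m b * ‖q a - q b‖ ^ 2 := by
    intro D hD
    refine mul_nonneg ?_ (Finset.sum_nonneg fun a _ => Finset.sum_nonneg fun b _ => ?_)
    · have := Finset.sum_pos (fun j (_ : j ∈ D) => hm j) (h.1 D hD)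
      positivity
    · have := (hm a).le; have := (hm b).le; positivity
  refine Finset.sum_pos' hterm ⟨C, hC, ?_⟩
  have hmC : 0 < ∑ j ∈ C, m j := Finset.sum_pos (fun j _ => hm j) (h.1 C hC)
  refine mul_pos (by positivity) ?_
  have hinner : ∀ a ∈ C, 0 ≤ ∑ b ∈ C, m a * m b * ‖q a - q b‖ ^ 2 := by
    intro a _
    refine Finset.sum_nonneg fun b _ => ?_
    have := (hm a).le; have := (hm b).le; positivity
  refine Finset.sum_pos' hinner ⟨i, hi, ?_⟩
  have hb : ∀ b ∈ C, 0 ≤ m i * m b * ‖q i - q b‖ ^ 2 := by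
    intro b _
    have := (hm i).le; have := (hm b).le; positivity
  refine Finset.sum_pos' hb ⟨j, hj, ?_⟩
  have hne : q i - q j ≠ 0 := sub_ne_zero.2 (hq i j hij)
  have : 0 < ‖q i - q j‖ := norm_pos_iff.2 hne
  have := hm i; have := hm j
  positivity

def pairPart {n : ℕ} (i j : Fin n) : Finset (Finset (Fin n)) :=
  insert {i, j} ((Finset.univ \ {i, j}).image fun k => ({k} : Finset (Fin n)))

lemma pairPart_isPartition {i j : Fin n} (hij : i ≠ j) : IsPartition (pairPart i j) := by
  refine ⟨?_, ?_, ?_⟩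
  · intro C hC
    rcases Finset.mem_insert.1 hC with rfl | hC
    · exact ⟨i, by simp⟩
    · obtain ⟨k, _, rfl⟩ := Finset.mem_image.1 hC
      exact ⟨k, by simp⟩
  · intro C hC D hD hne
    rcases Finset.mem_insert.1 hC with rfl | hC <;> rcases Finset.mem_insert.1 hD with h' | hD'
    · exact absurd h'.symm hne
    · obtain ⟨k, hk, rfl⟩ := Finset.mem_image.1 hD'
      simp only [Finset.mem_sdiff, Finset.mem_univ, true_and, Finset.mem_insert,
        Finset.mem_singleton] at hk
      push_neg at hk
      simp [Finset.disjoint_left, hk.1, hk.2, Ne.symm hk.1, Ne.symm hk.2]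
    · obtain ⟨k, hk, rfl⟩ := Finset.mem_image.1 hC
      simp only [Finset.mem_sdiff, Finset.mem_univ, true_and, Finset.mem_insert,
        Finset.mem_singleton] at hk
      push_neg at hk
      rw [h'] at hne ⊢
      simp only [Finset.disjoint_right, Finset.mem_insert, Finset.mem_singleton]
      intro a ha
      rcases ha with rfl | rfl
      · simpa using fun h => hk.1 h.symm
      · simpa using fun h => hk.2 h.symm
    · obtain ⟨k, _, rfl⟩ := Finset.mem_image.1 hC
      obtain ⟨l, _, rfl⟩ := Finset.mem_image.1 hD'
      have : k ≠ l := fun h => hne (by rw [h])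
      simp [Finset.disjoint_left, this]
  · intro a
    by_cases ha : a = i ∨ a = j
    · refine ⟨{i, j}, Finset.mem_insert_self _ _, ?_⟩
      rcases ha with rfl | rfl <;> simp
    · push_neg at ha
      refine ⟨{a}, Finset.mem_insert.2 (Or.inr (Finset.mem_image.2 ⟨a, ?_, rfl⟩)), by simp⟩
      simp [ha.1, ha.2]

lemma pairPart_card_lt {i j : Fin n} (hij : i ≠ j) : (pairPart i j).card < n := by
  refine card_lt_of_big_atom (pairPart_isPartition hij) (Finset.mem_insert_self _ _) ?_
  rw [Finset.card_insert_of_notMem (by simpa using hij), Finset.card_singleton]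

lemma gap_pairPart_zero (hm : ∀ i, 0 < m i) {i j : Fin n} (hij : i ≠ j) {q : Vec d n}
    (hq : q i = q j) : gap m (pairPart i j) q = 0 := by
  rw [gap_eq m hm (pairPart_isPartition hij)]
  refine Finset.sum_eq_zero fun C hC => ?_
  have : ∀ a ∈ C, ∀ b ∈ C, q a = q b := by
    rcases Finset.mem_insert.1 hC with rfl | hC
    · intro a ha b hb
      have key : ∀ c, c ∈ ({i, j} : Finset (Fin n)) → q c = q i := by
        intro c hc
        rcases Finset.mem_insert.1 hc with rfl | hc
        · rfl
        · rw [Finset.mem_singleton.1 hc, hq]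
      rw [key a ha, key b hb]
    · obtain ⟨k, _, rfl⟩ := Finset.mem_image.1 hC
      intro a ha b hb
      rw [Finset.mem_singleton.1 ha, Finset.mem_singleton.1 hb]
  refine mul_eq_zero_of_right _ (Finset.sum_eq_zero fun a ha => Finset.sum_eq_zero fun b hb => ?_)
  rw [this a ha b hb]
  simp


lemma cMin_card : (cMin n).card = n := by
  unfold cMin
  rw [Finset.card_image_of_injective _ (fun a b h => by simpa using h)]
  simp

def parts (n : ℕ) : Finset (Finset (Finset (Fin n))) :=
  @Finset.filter _ (fun 𝒟 => IsPartition 𝒟 ∧ 𝒟.card < n) (Classical.decPred _) Finset.univ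

lemma mem_parts {𝒟 : Finset (Finset (Fin n))} :
    𝒟 ∈ parts n ↔ IsPartition 𝒟 ∧ 𝒟.card < n := by
  unfold parts
  rw [@Finset.mem_filter _ _ (Classical.decPred _)]
  simp

lemma parts_nonempty (hn : 2 ≤ n) : (parts n).Nonempty := by
  haveI : Nonempty (Fin n) := ⟨⟨0, by omega⟩⟩
  refine ⟨{Finset.univ}, mem_parts.2 ⟨⟨?_, ?_, ?_⟩, ?_⟩⟩
  · intro C hC
    rw [Finset.mem_singleton.1 hC]
    exact Finset.univ_nonempty
  · intro C hC D hD hne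
    rw [Finset.mem_singleton.1 hC, Finset.mem_singleton.1 hD] at hne
    exact absurd rfl hne
  · intro i; exact ⟨Finset.univ, Finset.mem_singleton_self _, Finset.mem_univ i⟩
  · rw [Finset.card_singleton]; omega

def Ffun {d n : ℕ} (m : Fin n → ℝ) (δ : ℝ) (q : Vec d n) : ℝ :=
  if h : (parts n).Nonempty then
    (parts n).inf' h (fun 𝒟 => gap m 𝒟 q - (δ ^ 𝒟.card - δ ^ n)) else 0

lemma Ffun_eq (hn : 2 ≤ n) (δ : ℝ) (q : Vec d n) :
    Ffun m δ q = (parts n).inf' (parts_nonempty hn)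
      (fun 𝒟 => gap m 𝒟 q - (δ ^ 𝒟.card - δ ^ n)) := by
  unfold Ffun
  rw [dif_pos (parts_nonempty hn)]

lemma grafSet_iff (hn : 2 ≤ n) (hm : ∀ i, 0 < m i) {δ : ℝ} (q : Vec d n) :
    q ∈ GrafSet m δ (cMin n) ↔ 0 ≤ Ffun m δ q := by
  rw [Ffun_eq m hn, Finset.le_inf'_iff]
  constructor
  · intro hq 𝒟 h𝒟
    obtain ⟨hpart, hcard⟩ := mem_parts.1 h𝒟
    have := hq 𝒟 hpart
    rw [cMin_card] at this
    unfold gap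
    linarith
  · intro hq 𝒟 hpart
    by_cases hcard : 𝒟.card < n
    · have := hq 𝒟 (mem_parts.2 ⟨hpart, hcard⟩)
      rw [cMin_card]
      unfold gap at this
      linarith
    · rw [eq_cMin_of_card hpart hcard]

lemma continuous_finset_inf' {ι X : Type*} [TopologicalSpace X] (s : Finset ι)
    (hs : s.Nonempty) (f : ι → X → ℝ) (hf : ∀ i ∈ s, Continuous (f i)) :
    Continuous fun x => s.inf' hs fun i => f i x := by
  revert hf
  induction hs using Finset.Nonempty.cons_induction with
  | singleton a =>
    intro hf
    simpa using hf a (Finset.mem_singleton_self a)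
  | cons a t ha ht ih =>
    intro hf
    simp only [Finset.inf'_cons ht]
    exact (hf a (Finset.mem_cons_self a t)).min
      (ih fun i hi => hf i (Finset.mem_cons.2 (Or.inr hi)))

lemma continuous_finset_sup' {ι X : Type*} [TopologicalSpace X] (s : Finset ι)
    (hs : s.Nonempty) (f : ι → X → ℝ) (hf : ∀ i ∈ s, Continuous (f i)) :
    Continuous fun x => s.sup' hs fun i => f i x := by
  revert hf
  induction hs using Finset.Nonempty.cons_induction with
  | singleton a =>
    intro hf
    simpa using hf a (Finset.mem_singleton_self a)
  | cons a t ha ht ih =>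
    intro hf
    simp only [Finset.sup'_cons ht]
    exact (hf a (Finset.mem_cons_self a t)).max
      (ih fun i hi => hf i (Finset.mem_cons.2 (Or.inr hi)))

lemma continuous_JEfun (𝒟 : Finset (Finset (Fin n))) :
    Continuous fun q : Vec d n => JEfun m 𝒟 q := by
  unfold JEfun
  refine continuous_finset_sum _ fun C _ => Continuous.mul continuous_const ?_
  have h1 : Continuous fun q : Vec d n => ∑ j ∈ C, m j • q j :=
    continuous_finset_sum _ fun j _ => (continuous_apply j).const_smul (m j)
  exact ((h1.const_smul (∑ j ∈ C, m j)⁻¹).norm).pow 2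

lemma continuous_gap (𝒟 : Finset (Finset (Fin n))) :
    Continuous fun q : Vec d n => gap m 𝒟 q :=
  (continuous_JEfun m _).sub (continuous_JEfun m _)

lemma continuous_Ffun (hn : 2 ≤ n) (δ : ℝ) :
    Continuous fun q : Vec d n => Ffun m δ q := by
  have : (fun q : Vec d n => Ffun m δ q) = fun q => (parts n).inf' (parts_nonempty hn)
      (fun 𝒟 => gap m 𝒟 q - (δ ^ 𝒟.card - δ ^ n)) := by
    funext q
    exact Ffun_eq m hn δ q
  rw [this]
  exact continuous_finset_inf' _ _ _ fun 𝒟 _ => (continuous_gap m 𝒟).sub continuous_const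


lemma continuous_massInner_self :
    Continuous fun q : Vec d n => massInner m q q := by
  unfold massInner
  exact continuous_finset_sum _ fun i _ => Continuous.mul continuous_const
    ((continuous_apply i).inner (continuous_apply i))

lemma massInner_self_eq (q : Vec d n) : massInner m q q = ∑ i, m i * ‖q i‖ ^ 2 := by
  unfold massInner
  exact Finset.sum_congr rfl fun i _ => by rw [real_inner_self_eq_norm_sq]

lemma massInner_self_pos (hm : ∀ i, 0 < m i) {q : Vec d n} (hq : q ≠ 0) :
    0 < massInner m q q := by
  rw [massInner_self_eq]
  obtain ⟨i, hi⟩ : ∃ i, q i ≠ 0 := by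
    by_contra hcon
    push_neg at hcon
    exact hq (funext hcon)
  refine Finset.sum_pos' (fun j _ => by have := (hm j).le; positivity) ⟨i, Finset.mem_univ i, ?_⟩
  have : 0 < ‖q i‖ := norm_pos_iff.2 hi
  have := hm i
  positivity

lemma massInner_smul_smul (c : ℝ) (q : Vec d n) :
    massInner m (c • q) (c • q) = c ^ 2 * massInner m q q := by
  unfold massInner
  rw [Finset.mul_sum]
  refine Finset.sum_congr rfl fun i _ => ?_
  have : (c • q) i = c • q i := rfl
  rw [this, real_inner_smul_left, real_inner_smul_right]
  ring

def rad {d n : ℕ} (m : Fin n → ℝ) (δ : ℝ) (s : Vec d n) : ℝ :=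
  if h : (parts n).Nonempty then
    (parts n).sup' h (fun 𝒟 => (δ ^ 𝒟.card - δ ^ n) / gap m 𝒟 s) else 0

lemma rad_eq (hn : 2 ≤ n) (δ : ℝ) (s : Vec d n) :
    rad m δ s = (parts n).sup' (parts_nonempty hn)
      (fun 𝒟 => (δ ^ 𝒟.card - δ ^ n) / gap m 𝒟 s) := by
  unfold rad
  rw [dif_pos (parts_nonempty hn)]

lemma cpos {δ : ℝ} (hδ : 0 < δ) (hδ1 : δ < 1) {𝒟 : Finset (Finset (Fin n))}
    (h𝒟 : 𝒟 ∈ parts n) : 0 < δ ^ 𝒟.card - δ ^ n :=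
  sub_pos.2 (pow_lt_pow_right_of_lt_one₀ hδ hδ1 (mem_parts.1 h𝒟).2)

lemma gap_pos' (hm : ∀ i, 0 < m i) {𝒟 : Finset (Finset (Fin n))} (h𝒟 : 𝒟 ∈ parts n)
    {s : Vec d n} (hs : ∀ i j : Fin n, i ≠ j → s i ≠ s j) : 0 < gap m 𝒟 s :=
  gap_pos m hm (mem_parts.1 h𝒟).1 (mem_parts.1 h𝒟).2 hs

lemma rad_pos (hn : 2 ≤ n) (hm : ∀ i, 0 < m i) {δ : ℝ} (hδ : 0 < δ) (hδ1 : δ < 1)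
    {s : Vec d n} (hs : ∀ i j : Fin n, i ≠ j → s i ≠ s j) : 0 < rad m δ s := by
  rw [rad_eq m hn]
  obtain ⟨𝒟, h𝒟⟩ := parts_nonempty hn
  refine lt_of_lt_of_le (div_pos (cpos hδ hδ1 h𝒟) (gap_pos' m hm h𝒟 hs)) ?_
  exact Finset.le_sup' (fun 𝒟 => (δ ^ 𝒟.card - δ ^ n) / gap m 𝒟 s) h𝒟

lemma Ffun_smul_nonneg_iff (hn : 2 ≤ n) (hm : ∀ i, 0 < m i) {δ : ℝ} (hδ : 0 < δ)
    (hδ1 : δ < 1) {s : Vec d n} (hs : ∀ i j : Fin n, i ≠ j → s i ≠ s j) (μ : ℝ) :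
    0 ≤ Ffun m δ (μ • s) ↔ rad m δ s ≤ μ ^ 2 := by
  rw [Ffun_eq m hn, rad_eq m hn, Finset.le_inf'_iff, Finset.sup'_le_iff]
  constructor
  · intro h 𝒟 h𝒟
    have := h 𝒟 h𝒟
    rw [gap_smul] at this
    rw [div_le_iff₀ (gap_pos' m hm h𝒟 hs)]
    linarith
  · intro h 𝒟 h𝒟
    have := (div_le_iff₀ (gap_pos' m hm h𝒟 hs)).1 (h 𝒟 h𝒟)
    rw [gap_smul]
    linarith

lemma Ffun_smul_nonpos_iff (hn : 2 ≤ n) (hm : ∀ i, 0 < m i) {δ : ℝ} (hδ : 0 < δ)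
    (hδ1 : δ < 1) {s : Vec d n} (hs : ∀ i j : Fin n, i ≠ j → s i ≠ s j) (μ : ℝ) :
    Ffun m δ (μ • s) ≤ 0 ↔ μ ^ 2 ≤ rad m δ s := by
  rw [Ffun_eq m hn, rad_eq m hn, Finset.inf'_le_iff, Finset.le_sup'_iff]
  constructor
  · rintro ⟨𝒟, h𝒟, h⟩
    rw [gap_smul] at h
    refine ⟨𝒟, h𝒟, ?_⟩
    rw [le_div_iff₀ (gap_pos' m hm h𝒟 hs)]
    linarith
  · rintro ⟨𝒟, h𝒟, h⟩
    rw [le_div_iff₀ (gap_pos' m hm h𝒟 hs)] at h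
    refine ⟨𝒟, h𝒟, ?_⟩
    rw [gap_smul]
    linarith

lemma Ffun_smul_eq_zero_iff (hn : 2 ≤ n) (hm : ∀ i, 0 < m i) {δ : ℝ} (hδ : 0 < δ)
    (hδ1 : δ < 1) {s : Vec d n} (hs : ∀ i j : Fin n, i ≠ j → s i ≠ s j) {μ : ℝ}
    (hμ : 0 < μ) :
    Ffun m δ (μ • s) = 0 ↔ μ = Real.sqrt (rad m δ s) := by
  constructor
  · intro h
    have h1 := (Ffun_smul_nonneg_iff m hn hm hδ hδ1 hs μ).1 h.ge
    have h2 := (Ffun_smul_nonpos_iff m hn hm hδ hδ1 hs μ).1 h.le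
    have : μ ^ 2 = rad m δ s := le_antisymm h2 h1
    rw [← this, Real.sqrt_sq hμ.le]
  · intro h
    have hr : μ ^ 2 = rad m δ s := by
      rw [h, Real.sq_sqrt (rad_pos m hn hm hδ hδ1 hs).le]
    refine le_antisymm ?_ ?_
    · exact (Ffun_smul_nonpos_iff m hn hm hδ hδ1 hs μ).2 hr.le
    · exact (Ffun_smul_nonneg_iff m hn hm hδ hδ1 hs μ).2 hr.ge






lemma noncoll_iff {q : Vec d n} : q ∉ collSet d n ↔ ∀ i j : Fin n, i ≠ j → q i ≠ q j := by
  unfold collSet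
  simp only [Set.mem_setOf_eq, not_exists]
  constructor
  · intro h i j hij
    exact fun he => h i j ⟨hij, he⟩
  · rintro h i j ⟨hij, he⟩
    exact h i j hij he

lemma noncoll_smul {c : ℝ} (hc : c ≠ 0) {q : Vec d n} (hq : q ∉ collSet d n) :
    c • q ∉ collSet d n := by
  rw [noncoll_iff] at hq ⊢
  intro i j hij he
  have : (c • q) i = c • q i := rfl
  have h2 : c • q i = c • q j := he
  exact hq i j hij (smul_right_injective _ hc h2)

lemma Ffun_zero_ne (hn : 2 ≤ n) (hm : ∀ i, 0 < m i) {δ : ℝ} (hδ : 0 < δ) (hδ1 : δ < 1)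
    {q : Vec d n} (hq : Ffun m δ q = 0) : q ≠ 0 := by
  intro rfl'
  subst rfl'
  rw [Ffun_eq m hn] at hq
  obtain ⟨𝒟, h𝒟⟩ := parts_nonempty hn
  have hle := Finset.inf'_le (fun 𝒟 => gap m 𝒟 (0 : Vec d n) - (δ ^ 𝒟.card - δ ^ n)) h𝒟
  rw [hq] at hle
  have hg : gap m 𝒟 (0 : Vec d n) = 0 := by
    have : (0 : Vec d n) = (0 : ℝ) • (0 : Vec d n) := by simp
    rw [this, gap_smul]
    ring
  have := cpos hδ hδ1 h𝒟
  rw [hg] at hle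
  linarith

lemma Ffun_nonneg_noncoll (hn : 2 ≤ n) (hm : ∀ i, 0 < m i) {δ : ℝ} (hδ : 0 < δ)
    (hδ1 : δ < 1) {q : Vec d n} (hq : 0 ≤ Ffun m δ q) : q ∉ collSet d n := by
  rw [noncoll_iff]
  intro i j hij he
  rw [Ffun_eq m hn, Finset.le_inf'_iff] at hq
  have hmem : pairPart i j ∈ parts n :=
    mem_parts.2 ⟨pairPart_isPartition hij, pairPart_card_lt hij⟩
  have := hq _ hmem
  rw [gap_pairPart_zero m hm hij he] at this
  have := cpos hδ hδ1 hmem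
  linarith

lemma grafFrontier_eq (hn : 2 ≤ n) (hm : ∀ i, 0 < m i) {δ : ℝ} (hδ : 0 < δ) (hδ1 : δ < 1) :
    grafFrontier (d := d) m δ = {x : ↥(configSub (d := d) m) | Ffun m δ x.1 = 0} := by
  unfold grafFrontier
  have hA : (Subtype.val ⁻¹' GrafSet m δ (cMin n) : Set ↥(configSub (d := d) m))
      = {x | 0 ≤ Ffun m δ x.1} := by
    ext x
    exact grafSet_iff m hn hm x.1
  rw [hA]
  have hcont : Continuous fun x : ↥(configSub (d := d) m) => Ffun m δ x.1 :=
    (continuous_Ffun m hn δ).comp continuous_subtype_val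
  ext x
  simp only [Set.mem_setOf_eq]
  constructor
  · intro hx
    have hxA : 0 ≤ Ffun m δ x.1 := by
      have hclosed : IsClosed {x : ↥(configSub (d := d) m) | 0 ≤ Ffun m δ x.1} :=
        isClosed_le continuous_const hcont
      have := frontier_subset_closure (s := {x : ↥(configSub (d := d) m) | 0 ≤ Ffun m δ x.1})
      rw [hclosed.closure_eq] at this
      exact this hx
    rcases lt_or_eq_of_le hxA with hlt | heq
    · exfalso
      have hopen : IsOpen {y : ↥(configSub (d := d) m) | 0 < Ffun m δ y.1} :=
        isOpen_lt continuous_const hcont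
      have hsub : {y : ↥(configSub (d := d) m) | 0 < Ffun m δ y.1}
          ⊆ {y | 0 ≤ Ffun m δ y.1} := fun y hy => by
        simp only [Set.mem_setOf_eq] at hy ⊢
        exact hy.le
      have hint : x ∈ interior {y : ↥(configSub (d := d) m) | 0 ≤ Ffun m δ y.1} :=
        interior_maximal hsub hopen hlt
      exact hx.2 hint
    · exact heq.symm
  · intro hx
    rw [frontier_eq_closure_inter_closure]
    constructor
    · exact subset_closure (by simpa using hx.ge)
    · -- x is a limit of points with Ffun < 0
      obtain ⟨𝒟₀, h𝒟₀, hval⟩ := Finset.exists_mem_eq_inf' (parts_nonempty hn)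
        (fun 𝒟 => gap m 𝒟 x.1 - (δ ^ 𝒟.card - δ ^ n))
      have hgap0 : gap m 𝒟₀ x.1 = δ ^ 𝒟₀.card - δ ^ n := by
        have : Ffun m δ x.1 = gap m 𝒟₀ x.1 - (δ ^ 𝒟₀.card - δ ^ n) := by
          rw [Ffun_eq m hn, hval]
        rw [hx] at this
        linarith
      set u : ℕ → ↥(configSub (d := d) m) := fun k =>
        ⟨(1 - ((k : ℝ) + 1)⁻¹) • x.1, (configSub m).smul_mem _ x.2⟩ with hu
      have hmem : ∀ k : ℕ, u k ∈ ({y : ↥(configSub (d := d) m) | 0 ≤ Ffun m δ y.1})ᶜ := by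
        intro k
        simp only [Set.mem_compl_iff, Set.mem_setOf_eq, not_le, hu]
        set t : ℝ := 1 - ((k : ℝ) + 1)⁻¹ with ht
        have ht0 : 0 ≤ t := by
          have h1 : ((k : ℝ) + 1)⁻¹ ≤ 1 := by
            rw [inv_le_one_iff₀]
            right
            have : (0 : ℝ) ≤ k := Nat.cast_nonneg k
            linarith
          simp only [ht]
          linarith
        have ht1 : t < 1 := by
          have : 0 < ((k : ℝ) + 1)⁻¹ := by positivity
          simp only [ht]
          linarith
        have hF : Ffun m δ (t • x.1) ≤ gap m 𝒟₀ (t • x.1) - (δ ^ 𝒟₀.card - δ ^ n) := by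
          rw [Ffun_eq m hn]
          exact Finset.inf'_le _ h𝒟₀
        rw [gap_smul, hgap0] at hF
        have hc := cpos hδ hδ1 h𝒟₀
        have htt : t ^ 2 < 1 := pow_lt_one₀ ht0 ht1 (by norm_num)
        nlinarith
      have htend : Filter.Tendsto u Filter.atTop (nhds x) := by
        rw [tendsto_subtype_rng]
        have h1 : Filter.Tendsto (fun k : ℕ => 1 - ((k : ℝ) + 1)⁻¹) Filter.atTop (nhds 1) := by
          have := tendsto_one_div_add_atTop_nhds_zero_nat (𝕜 := ℝ)
          have h2 : Filter.Tendsto (fun k : ℕ => ((k : ℝ) + 1)⁻¹) Filter.atTop (nhds 0) := by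
            simpa [one_div] using this
          have := Filter.Tendsto.const_sub (1 : ℝ) h2
          simpa using this
        have := Filter.Tendsto.smul_const h1 (x.1 : Vec d n)
        simpa using this
      exact mem_closure_of_tendsto htend (Filter.Eventually.of_forall hmem)

end aux

/-- There is `δ₀ ∈ (0,1)` such that for all `δ ∈ (0,δ₀)`: every ray
`R_s = {λs : λ > 0}` with `s ∈ S∖Δ` meets `∂Ξ^{(δ)}_{𝒞min}` in exactly one point, and the
map sending `s` to this point is a homeomorphism `S∖Δ ≃ₜ ∂Ξ^{(δ)}_{𝒞min}`. -/
theorem stmt18 {d n : ℕ} (hd : 1 ≤ d) (hn : 2 ≤ n)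
    (m : Fin n → ℝ) (hm : ∀ i, 0 < m i) :
    ∃ δ0 : ℝ, 0 < δ0 ∧ δ0 < 1 ∧ ∀ δ : ℝ, 0 < δ → δ < δ0 →
      (∀ s ∈ sphereCompl (d := d) m,
        ∃! x : ↥(configSub (d := d) m), x ∈ grafFrontier m δ ∧
          ∃ c : ℝ, 0 < c ∧ (x : Vec d n) = c • (s : Vec d n))
      ∧ ∃ h : ↥(sphereCompl (d := d) m) ≃ₜ ↥(grafFrontier (d := d) m δ),
          ∀ s : ↥(sphereCompl (d := d) m),
            ∃ c : ℝ, 0 < c ∧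
              (((h s : ↥(configSub (d := d) m))) : Vec d n)
                = c • (((s : ↥(configSub (d := d) m))) : Vec d n) := by
  refine ⟨1/2, by norm_num, by norm_num, ?_⟩
  intro δ hδ0 hδhalf
  have hδ1 : δ < 1 := by linarith
  have hfront := grafFrontier_eq (d := d) m hn hm hδ0 hδ1
  constructor
  · rintro s ⟨hs1, hs2⟩
    have hsnc := noncoll_iff.1 hs2
    have hrad := rad_pos m hn hm hδ0 hδ1 hsnc
    have hlam : 0 < Real.sqrt (rad m δ s.1) := Real.sqrt_pos.2 hrad
    refine ⟨⟨Real.sqrt (rad m δ s.1) • s.1, (configSub m).smul_mem _ s.2⟩,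
      ⟨?_, Real.sqrt (rad m δ s.1), hlam, rfl⟩, ?_⟩
    · rw [hfront]
      exact (Ffun_smul_eq_zero_iff m hn hm hδ0 hδ1 hsnc hlam).2 rfl
    · rintro y ⟨hyf, c, hc, hyv⟩
      rw [hfront] at hyf
      have hy0 : Ffun m δ (c • (s.1 : Vec d n)) = 0 := by
        rw [← hyv]; exact hyf
      have hced : c = Real.sqrt (rad m δ s.1) :=
        (Ffun_smul_eq_zero_iff m hn hm hδ0 hδ1 hsnc hc).1 hy0
      apply Subtype.ext
      rw [hyv, hced]
  · have hmemF : ∀ s : ↥(sphereCompl (d := d) m),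
        (⟨Real.sqrt (rad m δ s.1.1) • s.1.1, (configSub m).smul_mem _ s.1.2⟩ :
          ↥(configSub (d := d) m)) ∈ grafFrontier m δ := by
      intro s
      have hsnc := noncoll_iff.1 s.2.2
      have hlam : 0 < Real.sqrt (rad m δ s.1.1) :=
        Real.sqrt_pos.2 (rad_pos m hn hm hδ0 hδ1 hsnc)
      rw [hfront]
      exact (Ffun_smul_eq_zero_iff m hn hm hδ0 hδ1 hsnc hlam).2 rfl
    have hxfacts : ∀ x : ↥(grafFrontier (d := d) m δ),
        0 < massInner m x.1.1 x.1.1 ∧ (x.1.1 : Vec d n) ∉ collSet d n := by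
      intro x
      have hFx : Ffun m δ x.1.1 = 0 := (Set.ext_iff.1 hfront x.1).1 x.2
      exact ⟨massInner_self_pos m hm (Ffun_zero_ne m hn hm hδ0 hδ1 hFx),
        Ffun_nonneg_noncoll m hn hm hδ0 hδ1 hFx.ge⟩
    have hmemG : ∀ x : ↥(grafFrontier (d := d) m δ),
        (⟨(Real.sqrt (massInner m x.1.1 x.1.1))⁻¹ • x.1.1,
          (configSub m).smul_mem _ x.1.2⟩ : ↥(configSub (d := d) m)) ∈ sphereCompl m := by
      intro x
      obtain ⟨hM, hnc⟩ := hxfacts x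
      constructor
      · show massInner m (_ • x.1.1) (_ • x.1.1) = 1
        rw [massInner_smul_smul, inv_pow, Real.sq_sqrt hM.le, inv_mul_cancel₀ hM.ne']
      · exact noncoll_smul (inv_ne_zero (Real.sqrt_pos.2 hM).ne') hnc
    have hvv : Continuous fun s : ↥(sphereCompl (d := d) m) => (s.1.1 : Vec d n) :=
      continuous_subtype_val.comp continuous_subtype_val
    have hww : Continuous fun x : ↥(grafFrontier (d := d) m δ) => (x.1.1 : Vec d n) :=
      continuous_subtype_val.comp continuous_subtype_val
    have hcontrad : Continuous fun s : ↥(sphereCompl (d := d) m) => rad m δ s.1.1 := by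
      have hre : (fun s : ↥(sphereCompl (d := d) m) => rad m δ s.1.1)
          = fun s => (parts n).sup' (parts_nonempty hn)
              (fun 𝒟 => (δ ^ 𝒟.card - δ ^ n) / gap m 𝒟 s.1.1) := by
        funext s; exact rad_eq m hn δ s.1.1
      rw [hre]
      refine continuous_finset_sup' _ _ _ (fun 𝒟 h𝒟 => ?_)
      refine Continuous.div continuous_const ((continuous_gap m 𝒟).comp hvv) ?_
      intro s
      exact (gap_pos' m hm h𝒟 (noncoll_iff.1 s.2.2)).ne'
    have hcontF : Continuous fun s : ↥(sphereCompl (d := d) m) =>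
        (⟨⟨Real.sqrt (rad m δ s.1.1) • s.1.1, (configSub m).smul_mem _ s.1.2⟩,
          hmemF s⟩ : ↥(grafFrontier (d := d) m δ)) := by
      refine Continuous.subtype_mk (Continuous.subtype_mk ?_ _) _
      exact (Real.continuous_sqrt.comp hcontrad).smul hvv
    have hcontG : Continuous fun x : ↥(grafFrontier (d := d) m δ) =>
        (⟨⟨(Real.sqrt (massInner m x.1.1 x.1.1))⁻¹ • x.1.1,
          (configSub m).smul_mem _ x.1.2⟩, hmemG x⟩ : ↥(sphereCompl (d := d) m)) := by
      refine Continuous.subtype_mk (Continuous.subtype_mk ?_ _) _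
      refine Continuous.smul (f := fun x : ↥(grafFrontier (d := d) m δ) => (Real.sqrt (massInner m x.1.1 x.1.1))⁻¹) ?_ hww
      refine Continuous.inv₀ (Real.continuous_sqrt.comp
        ((continuous_massInner_self m).comp hww)) ?_
      intro x
      exact (Real.sqrt_pos.2 (hxfacts x).1).ne'
    refine ⟨Homeomorph.mk ⟨fun s =>
        ⟨⟨Real.sqrt (rad m δ s.1.1) • s.1.1, (configSub m).smul_mem _ s.1.2⟩, hmemF s⟩,
      fun x => ⟨⟨(Real.sqrt (massInner m x.1.1 x.1.1))⁻¹ • x.1.1,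
          (configSub m).smul_mem _ x.1.2⟩, hmemG x⟩, ?_, ?_⟩ hcontF hcontG, ?_⟩
    · -- left inverse
      intro s
      apply Subtype.ext
      apply Subtype.ext
      show (Real.sqrt (massInner m (Real.sqrt (rad m δ s.1.1) • s.1.1)
          (Real.sqrt (rad m δ s.1.1) • s.1.1)))⁻¹ • (Real.sqrt (rad m δ s.1.1) • s.1.1)
        = (s.1.1 : Vec d n)
      have hsnc := noncoll_iff.1 s.2.2
      have hlam : 0 < Real.sqrt (rad m δ s.1.1) :=
        Real.sqrt_pos.2 (rad_pos m hn hm hδ0 hδ1 hsnc)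
      rw [massInner_smul_smul, s.2.1, mul_one, Real.sqrt_sq hlam.le, smul_smul,
        inv_mul_cancel₀ hlam.ne', one_smul]
    · -- right inverse
      intro x
      apply Subtype.ext
      apply Subtype.ext
      obtain ⟨hM, hnc⟩ := hxfacts x
      have hFx : Ffun m δ x.1.1 = 0 := (Set.ext_iff.1 hfront x.1).1 x.2
      have hsqM : 0 < Real.sqrt (massInner m x.1.1 x.1.1) := Real.sqrt_pos.2 hM
      have hq' : Real.sqrt (massInner m x.1.1 x.1.1) •
          ((Real.sqrt (massInner m x.1.1 x.1.1))⁻¹ • (x.1.1 : Vec d n)) = x.1.1 := by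
        rw [smul_smul, mul_inv_cancel₀ hsqM.ne', one_smul]
      have hnc' : ((Real.sqrt (massInner m x.1.1 x.1.1))⁻¹ • (x.1.1 : Vec d n))
          ∉ collSet d n := noncoll_smul (inv_ne_zero hsqM.ne') hnc
      have hFq : Ffun m δ (Real.sqrt (massInner m x.1.1 x.1.1) •
          ((Real.sqrt (massInner m x.1.1 x.1.1))⁻¹ • (x.1.1 : Vec d n))) = 0 := by
        rw [hq']; exact hFx
      have hkey := (Ffun_smul_eq_zero_iff m hn hm hδ0 hδ1 (noncoll_iff.1 hnc') hsqM).1 hFq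
      show Real.sqrt (rad m δ ((Real.sqrt (massInner m x.1.1 x.1.1))⁻¹ • (x.1.1 : Vec d n)))
          • ((Real.sqrt (massInner m x.1.1 x.1.1))⁻¹ • (x.1.1 : Vec d n)) = (x.1.1 : Vec d n)
      rw [← hkey]
      exact hq'
    · intro s
      have hsnc := noncoll_iff.1 s.2.2
      exact ⟨Real.sqrt (rad m δ s.1.1),
        Real.sqrt_pos.2 (rad_pos m hn hm hδ0 hδ1 hsnc), rfl⟩
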